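/- Let v1, v2, v3 be unit vectors in R^3 with pairwise inner products all equal to 1/√5 (the icosahedral configuration). Then |det[v1 v2 v3]| = √(2(5+√5))/5. -/

import Mathlib

/-! The squared determinant of `[v1 v2 v3]` is the determinant of the Gram matrix of the `vᵢ`,
which for unit vectors with common inner product `c` is `(1 - c)² (1 + 2c)`; at `c = 1/√5` this
equals `2(5 + √5)/25`. -/

open Matrix

theorem det_sq_eq_det_gram {ι : Type*} [Fintype ι] [DecidableEq ι]
    (v : ι → EuclideanSpace ℝ ι) :
    (of fun i j => v j i).det ^ 2 = (gram ℝ v).det := by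
  rw [gram_eq_conjTranspose_mul (EuclideanSpace.basisFun ι ℝ), det_mul, det_conjTranspose,
    star_trivial, sq]
  simp

theorem det_fin_three_of_diag_of_offDiag {R : Type*} [CommRing R]
    {A : Matrix (Fin 3) (Fin 3) R} {c : R}
    (hdiag : ∀ i, A i i = 1) (hoff : ∀ i j, i ≠ j → A i j = c) :
    A.det = (1 - c) ^ 2 * (1 + 2 * c) := by
  rw [det_fin_three]
  simp only [hdiag, hoff, ne_eq, Fin.reduceEq, not_false_eq_true]
  ring

theorem det_gram_of_equiangular_unit {E : Type*} [NormedAddCommGroup E] [InnerProductSpace ℝ E]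
    {v : Fin 3 → E} {c : ℝ} (hunit : ∀ i, ‖v i‖ = 1)
    (hangle : ∀ i j, i ≠ j → inner ℝ (v i) (v j) = c) :
    (gram ℝ v).det = (1 - c) ^ 2 * (1 + 2 * c) :=
  det_fin_three_of_diag_of_offDiag
    (fun i => by rw [gram_apply, real_inner_self_eq_norm_sq, hunit, one_pow])
    (fun i j hij => by rw [gram_apply, hangle i j hij])

theorem one_sub_inv_sqrt_five_sq_mul :
    (1 - 1 / √5) ^ 2 * (1 + 2 * (1 / √5)) = (√(2 * (5 + √5)) / 5) ^ 2 := by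
  have h5 : √5 ^ 2 = 5 := Real.sq_sqrt (by norm_num)
  rw [div_pow, Real.sq_sqrt (by positivity)]
  field_simp
  nlinarith [h5]

/-- If `v1, v2, v3` are unit vectors in `ℝ³` with pairwise inner products `1/√5`
(the icosahedral configuration), then `|det [v1 v2 v3]| = √(2(5+√5))/5`. -/
theorem icosahedral_config_abs_det
    (v1 v2 v3 : EuclideanSpace ℝ (Fin 3))
    (h1 : ‖v1‖ = 1) (h2 : ‖v2‖ = 1) (h3 : ‖v3‖ = 1)
    (h12 : (inner ℝ v1 v2 : ℝ) = 1 / Real.sqrt 5)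
    (h13 : (inner ℝ v1 v3 : ℝ) = 1 / Real.sqrt 5)
    (h23 : (inner ℝ v2 v3 : ℝ) = 1 / Real.sqrt 5) :
    |(Matrix.of fun i j : Fin 3 => (![v1, v2, v3] j) i).det|
      = Real.sqrt (2 * (5 + Real.sqrt 5)) / 5 := by
  have hgram : (gram ℝ ![v1, v2, v3]).det = (1 - 1 / √5) ^ 2 * (1 + 2 * (1 / √5)) := by
    refine det_gram_of_equiangular_unit (fun i => ?_) (fun i j hij => ?_)
    · fin_cases i <;> assumption
    · fin_cases i <;> fin_cases j <;> simp_all [real_inner_comm]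
  rw [← Real.sqrt_sq_eq_abs, det_sq_eq_det_gram, hgram, one_sub_inv_sqrt_five_sq_mul,
    Real.sqrt_sq (by positivity)]
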